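/- Let (X, T) be a fixed-point free compact dynamical system. Then there is a constant C > 0 such that for every prime p, the ℤ_p-index of the free ℤ_p-space (P_p(X), T) is finite and satisfies ind_p P_p(X) < C·p. -/

import Mathlib

/-!
Let `δ = min_x d(x, Tx) > 0` and cover `X` by `N` balls `B_c` of radius `δ / 2`; no orbit meets
`B_c` at two consecutive times. For a `p`-periodic point `x`, the profile `g ↦ ρ_c(T^g x)` on `ℤ_p`
of a bump function `ρ_c` of `B_c` is therefore nonconstant when `x ∈ B_c`, so one of its Fourier
coefficients `ẑ(κ)`, `κ ≠ 0`, does not vanish, and `T` multiplies `ẑ(κ)` by the root of unity `ζ^κ`.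
Recording in which of the `p` open sectors of angle `2π / p` around the `ζ^(-κg)` (or around their
rotations by `π / p`) the coefficient `ẑ(κ)` lies is a continuous equivariant choice of one element
`g ∈ ℤ_p`, so after normalisation these `2N(p - 1)` sector functions give a map into `E_n ℤ_p` with
`n ≤ 2Np`.
-/

open Function

/-- The standard model of `E_nℤ_p`, the join of `n+1` copies of the discrete space
`ℤ_p`: formal convex combinations `t₀g₀ ⊕ ⋯ ⊕ t_ng_n` of points of `ℤ_p`, realized
inside `ℝ^{Fin (n+1) × ZMod p}`. -/
def EnSpace (p n : ℕ) : Set (Fin (n+1) × ZMod p → ℝ) :=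
  {f | (∀ a, 0 ≤ f a) ∧ (∑ᶠ a, f a = 1) ∧
    ∀ (i : Fin (n+1)) (g h : ZMod p), 0 < f (i, g) → 0 < f (i, h) → g = h}

/-- The generator of the ℤ_p-action on (the ambient space of) `E_nℤ_p`. -/
def enShift (p n : ℕ) (f : Fin (n+1) × ZMod p → ℝ) : Fin (n+1) × ZMod p → ℝ :=
  fun a => f (a.1, a.2 + 1)

/-- The ℤ_p-coindex of a ℤ_p-space `(X, T)`: the supremum (in `WithBot ℕ∞`, with `⊥`
playing the role of `-1`, attained exactly for the empty space) of all `n` such that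
there is a ℤ_p-equivariant continuous map `E_nℤ_p → X`. -/
noncomputable def coind (p : ℕ) (X : Type*) [TopologicalSpace X] (T : X → X) :
    WithBot ℕ∞ :=
  sSup {k : WithBot ℕ∞ | ∃ (n : ℕ) (φ : EnSpace p n → X),
    k = ((n : ℕ∞) : WithBot ℕ∞) ∧ Continuous φ ∧
    ∀ e e' : EnSpace p n,
      (e' : Fin (n+1) × ZMod p → ℝ) = enShift p n (e : Fin (n+1) × ZMod p → ℝ) →
      φ e' = T (φ e)}

/-- The set of `p`-periodic points of `T`. -/
def perSet {X : Type*} (T : X → X) (p : ℕ) : Set X := {x | T^[p] x = x}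

/-- The restriction of `T` to its set of `p`-periodic points. -/
def perMap {X : Type*} (T : X → X) (p : ℕ) : perSet T p → perSet T p :=
  fun x => ⟨T x.1, by
    have h : T^[p] x.1 = x.1 := x.2
    show T^[p] (T x.1) = T x.1
    rw [← Function.iterate_succ_apply, Function.iterate_succ_apply', h]⟩

/-- The ℤ_p-index of a ℤ_p-space `(X, T)`: the least `n` (in `ℕ∞`) such that there is a
ℤ_p-equivariant continuous map `X → E_nℤ_p`. -/
noncomputable def zpIndex (p : ℕ) (X : Type*) [TopologicalSpace X] (T : X → X) : ℕ∞ :=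
  sInf {k : ℕ∞ | ∃ (n : ℕ) (φ : X → EnSpace p n),
    k = (n : ℕ∞) ∧ Continuous φ ∧
    ∀ x : X, (φ (T x) : Fin (n+1) × ZMod p → ℝ)
      = enShift p n ((φ x : Fin (n+1) × ZMod p → ℝ))}

open Complex ZMod ComplexConjugate
open scoped Real

theorem Complex.norm_one_add_exp_ofReal_mul_I (θ : ℝ) :
    ‖1 + exp (θ * I)‖ = 2 * |Real.cos (θ / 2)| := by
  have h : 1 + exp (θ * I) = exp ((θ / 2 : ℝ) * I) * (2 * Real.cos (θ / 2) : ℝ) := by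
    push_cast
    rw [two_cos, mul_add, ← exp_add, ← exp_add]
    ring_nf
    simp [add_comm]
  rw [h, norm_mul, norm_exp_ofReal_mul_I, one_mul, Complex.norm_real, Real.norm_eq_abs, abs_mul,
    abs_two]

theorem Real.abs_cos_pi_mul_div_le {k N : ℕ} (hk : 0 < k) (hkN : k < N) :
    |Real.cos (π * k / N)| ≤ Real.cos (π / N) := by
  have hN : (0 : ℝ) < N := by exact_mod_cast hk.trans hkN
  have hk' : (1 : ℝ) ≤ k := by exact_mod_cast hk
  have hkN' : (k : ℝ) + 1 ≤ N := by exact_mod_cast hkN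
  have h1 : π / N ≤ π * k / N := by gcongr; nlinarith [Real.pi_pos]
  have h2 : π * k / N ≤ π - π / N := by
    rw [div_le_iff₀ hN, sub_mul, div_mul_cancel₀ _ hN.ne']; nlinarith [Real.pi_pos]
  have h0 : 0 ≤ π / N := by positivity
  rw [abs_le, ← Real.cos_pi_sub (π / N)]
  exact ⟨Real.cos_le_cos_of_nonneg_of_le_pi (by linarith) (by linarith [Real.pi_pos]) h2,
    Real.cos_le_cos_of_nonneg_of_le_pi h0 (by linarith) h1⟩

theorem ZMod.norm_stdAddChar_add_stdAddChar_le {N : ℕ} [NeZero N] {a b : ZMod N} (hab : a ≠ b) :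
    ‖stdAddChar a + stdAddChar b‖ ≤ 2 * Real.cos (π / N) := by
  have hd : (a - b).val ≠ 0 := by rwa [ne_eq, ZMod.val_eq_zero, sub_eq_zero]
  have hsum : stdAddChar a + stdAddChar b = stdAddChar b * (1 + stdAddChar (a - b)) := by
    rw [mul_add, mul_one, ← AddChar.map_add_eq_mul, add_sub_cancel, add_comm]
  rw [hsum, norm_mul, stdAddChar_apply, Circle.norm_coe, one_mul, stdAddChar_apply, toCircle_apply,
    show 2 * π * I * (a - b).val / N = ((2 * π * (a - b).val / N : ℝ) : ℂ) * I by push_cast; ring,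
    norm_one_add_exp_ofReal_mul_I, show 2 * π * (a - b).val / N / 2 = π * (a - b).val / N by ring]
  gcongr
  exact Real.abs_cos_pi_mul_div_le (Nat.pos_of_ne_zero hd) (ZMod.val_lt _)

lemma ZMod.dft_comp_add_right {N : ℕ} [NeZero N] {E : Type*} [AddCommGroup E] [Module ℂ E]
    (Φ : ZMod N → E) (a k : ZMod N) :
    𝓕 (fun j ↦ Φ (j + a)) k = stdAddChar (a * k) • 𝓕 Φ k := by
  simp only [dft_apply, Finset.smul_sum, smul_smul, ← AddChar.map_add_eq_mul]
  refine Fintype.sum_equiv (Equiv.addRight a) _ _ fun j ↦ ?_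
  simp only [Equiv.coe_addRight]
  congr 2
  ring

lemma ZMod.exists_dft_ne_zero_of_ne {N : ℕ} [NeZero N] {E : Type*} [AddCommGroup E] [Module ℂ E]
    {Φ : ZMod N → E} {j j' : ZMod N} (h : Φ j ≠ Φ j') : ∃ k ≠ 0, 𝓕 Φ k ≠ 0 := by
  by_contra! H
  have hconst : ∀ j, Φ j = (N : ℂ)⁻¹ • 𝓕 Φ 0 := fun j ↦ by
    rw [← congrFun (dft.symm_apply_apply Φ) j, invDFT_apply,
      Finset.sum_eq_single 0 (fun k _ hk ↦ by rw [H k hk, smul_zero]) (by simp)]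
    simp
  exact h ((hconst j).trans (hconst j').symm)

/-- For `‖w‖ = 1` and `c = cos α`, this is positive exactly on the open sector of half-angle `α`
around `w`. -/
noncomputable def sectorBump (c : ℝ) (w z : ℂ) : ℝ := max 0 ((z * conj w).re - c * ‖z‖)

section sectorBump

variable {c : ℝ} {u w z : ℂ}

lemma sectorBump_nonneg : 0 ≤ sectorBump c w z := le_max_left _ _

lemma continuous_sectorBump : Continuous (sectorBump c w) := by
  unfold sectorBump; fun_prop

lemma sectorBump_mul_mul (hu : ‖u‖ = 1) : sectorBump c (u * w) (u * z) = sectorBump c w z := by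
  have huu : u * conj u = 1 := by rw [Complex.mul_conj', hu]; norm_num
  have : u * z * conj (u * w) = z * conj w := by
    rw [map_mul]; linear_combination (z * conj w) * huu
  simp only [sectorBump, this, hu, norm_mul, one_mul]

lemma lt_norm_add_of_sectorBump_pos (hu : 0 < sectorBump c u z) (hw : 0 < sectorBump c w z) :
    2 * c < ‖u + w‖ := by
  simp only [sectorBump, lt_max_iff, lt_irrefl, false_or, sub_pos] at hu hw
  have hsum : (z * conj u).re + (z * conj w).re ≤ ‖z‖ * ‖u + w‖ := by
    rw [← Complex.add_re, ← mul_add, ← map_add, ← Complex.norm_conj (u + w), ← norm_mul]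
    exact Complex.re_le_norm _
  have hz : 0 < ‖z‖ := norm_pos_iff.2 (by rintro rfl; simp at hu)
  nlinarith

lemma exists_sectorBump_exp_pos {N : ℕ} (hN : 0 < N) (hz : z ≠ 0) :
    ∃ t : ℤ, 0 < sectorBump (Real.cos (π / N)) (exp ((π * t / N : ℝ) * I)) z := by
  have hNR : (0 : ℝ) < N := by exact_mod_cast hN
  set t := round (z.arg * N / π)
  set φ : ℝ := z.arg - π * t / N
  refine ⟨t, ?_⟩
  have hre : (z * conj (exp ((π * t / N : ℝ) * I))).re = ‖z‖ * Real.cos φ := by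
    conv_lhs => rw [← Complex.norm_mul_exp_arg_mul_I z]
    rw [← Complex.exp_conj, map_mul, Complex.conj_ofReal, Complex.conj_I, mul_assoc, ← exp_add,
      show (z.arg : ℂ) * I + (π * t / N : ℝ) * -I = (φ : ℂ) * I by push_cast [φ]; ring,
      Complex.re_ofReal_mul, Complex.exp_ofReal_mul_I_re]
  have hφ : |φ| ≤ π / (2 * N) := by
    have h := abs_sub_round (z.arg * N / π)
    have : φ = π / N * (z.arg * N / π - t) := by simp only [φ]; field_simp
    rw [this, abs_mul, abs_of_pos (by positivity)]
    calc π / N * |z.arg * N / π - t| ≤ π / N * (1 / 2) := by gcongr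
      _ = π / (2 * N) := by ring
  have hcos : Real.cos (π / N) < Real.cos φ := by
    rw [← Real.cos_abs φ]
    apply Real.cos_lt_cos_of_nonneg_of_le_pi (abs_nonneg φ)
    · exact div_le_self Real.pi_pos.le (by exact_mod_cast hN)
    · calc |φ| ≤ π / (2 * N) := hφ
        _ < π / N := by gcongr; linarith
  simp only [sectorBump, lt_max_iff, lt_irrefl, false_or, sub_pos, hre]
  have := norm_pos_iff.mpr hz
  nlinarith

lemma exists_sectorBump_stdAddChar_mul_pos {N : ℕ} [NeZero N] (hz : z ≠ 0) :
    ∃ (q : ZMod N) (σ : Fin 2),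
      0 < sectorBump (Real.cos (π / N)) (stdAddChar q * exp ((π * σ / N : ℝ) * I)) z := by
  obtain ⟨t, ht⟩ := exists_sectorBump_exp_pos (NeZero.pos N) hz
  have hσ : ((t % 2).toNat : ℤ) = t % 2 := Int.toNat_of_nonneg (Int.emod_nonneg _ two_ne_zero)
  refine ⟨(t / 2 : ℤ), ⟨(t % 2).toNat, by omega⟩, ?_⟩
  convert ht using 2
  have ht2 : (t : ℝ) = 2 * (t / 2 : ℤ) + ((t % 2).toNat : ℤ) := by
    rw [hσ]; exact_mod_cast (Int.mul_ediv_add_emod t 2).symm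
  rw [stdAddChar_coe, ← exp_add, ht2]
  congr 1
  push_cast
  ring

end sectorBump

theorem zpIndex_le_of_family {p n : ℕ} [NeZero p] {Y : Type*} [TopologicalSpace Y] {S : Y → Y}
    (Φ : Fin (n + 1) → Y → ZMod p → ℝ) (hcont : ∀ i g, Continuous fun y ↦ Φ i y g)
    (hnonneg : ∀ i y g, 0 ≤ Φ i y g) (hshift : ∀ i y g, Φ i (S y) g = Φ i y (g + 1))
    (hunique : ∀ i y g h, 0 < Φ i y g → 0 < Φ i y h → g = h) (hpos : ∀ y, ∃ i g, 0 < Φ i y g) :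
    zpIndex p Y S ≤ n := by
  set mass : Y → ℝ := fun y ↦ ∑ i, ∑ g, Φ i y g
  have hmass_pos : ∀ y, 0 < mass y := fun y ↦ by
    obtain ⟨i, g, h⟩ := hpos y
    refine h.trans_le ((Finset.single_le_sum (fun g _ ↦ hnonneg i y g) (Finset.mem_univ g)).trans ?_)
    exact Finset.single_le_sum (f := fun i ↦ ∑ g, Φ i y g)
      (fun i _ ↦ Finset.sum_nonneg fun g _ ↦ hnonneg i y g) (Finset.mem_univ i)
  have hmass_shift : ∀ y, mass (S y) = mass y := fun y ↦
    Finset.sum_congr rfl fun i _ ↦ by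
      simp only [hshift]
      exact Fintype.sum_equiv (Equiv.addRight 1) _ _ fun g ↦ rfl
  refine sInf_le ⟨n, fun y ↦ ⟨fun a ↦ Φ a.1 y a.2 / mass y, fun a ↦ ?_, ?_, fun i g h hg hh ↦ ?_⟩,
    rfl, ?_, fun y ↦ ?_⟩
  · exact div_nonneg (hnonneg _ _ _) (hmass_pos y).le
  · rw [finsum_eq_sum_of_fintype, ← Finset.sum_div, Fintype.sum_prod_type]
    exact div_self (hmass_pos y).ne'
  · exact hunique i y g h ((div_pos_iff_of_pos_right (hmass_pos y)).mp hg)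
      ((div_pos_iff_of_pos_right (hmass_pos y)).mp hh)
  · refine (continuous_pi fun a ↦ ?_).subtype_mk _
    exact ((hcont a.1 a.2).div (continuous_finsetSum _ fun i _ ↦
      continuous_finsetSum _ fun g _ ↦ hcont i g)) fun y ↦ (hmass_pos y).ne'
  · funext a
    simp only [enShift, hshift, hmass_shift]

theorem zpIndex_le_card_of_family {p : ℕ} [NeZero p] {Y : Type*} [TopologicalSpace Y] {S : Y → Y}
    {ι : Type*} [Fintype ι] (Φ : ι → Y → ZMod p → ℝ) (hcont : ∀ i g, Continuous fun y ↦ Φ i y g)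
    (hnonneg : ∀ i y g, 0 ≤ Φ i y g) (hshift : ∀ i y g, Φ i (S y) g = Φ i y (g + 1))
    (hunique : ∀ i y g h, 0 < Φ i y g → 0 < Φ i y h → g = h) (hpos : ∀ y, ∃ i g, 0 < Φ i y g) :
    zpIndex p Y S ≤ Fintype.card ι := by
  -- A spare slot carrying the zero function gives `card ι + 1` slots, so `ι` may be empty.
  let e : Fin (Fintype.card ι + 1) ≃ Option ι := (Fintype.equivFinOfCardEq (by simp)).symm
  let Ψ : Option ι → Y → ZMod p → ℝ := fun o y g ↦ o.elim 0 fun i ↦ Φ i y g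
  refine zpIndex_le_of_family (fun a ↦ Ψ (e a)) (fun a g ↦ ?_) (fun a y g ↦ ?_) (fun a y g ↦ ?_)
    (fun a y g h ↦ ?_) fun y ↦ ?_
  · cases e a <;> simp [Ψ, continuous_const, hcont]
  · cases e a <;> simp [Ψ, hnonneg]
  · cases e a <;> simp [Ψ, hshift]
  · cases e a <;> simp [Ψ]
    exact hunique _ y g h
  · obtain ⟨i, g, hg⟩ := hpos y
    exact ⟨e.symm (some i), g, by simpa [Ψ] using hg⟩

theorem zpIndex_le_of_nonconstant_profiles {p : ℕ} [Fact p.Prime] {Y : Type*} [TopologicalSpace Y]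
    {S : Y → Y} {ι : Type*} [Fintype ι] (v : ι → Y → ZMod p → ℂ)
    (hcont : ∀ i g, Continuous fun y ↦ v i y g) (hshift : ∀ i y g, v i (S y) g = v i y (g + 1))
    (hnonconst : ∀ y, ∃ i g g', v i y g ≠ v i y g') :
    zpIndex p Y S ≤ 2 * Fintype.card ι * p := by
  set c := Real.cos (π / p)
  -- The open sectors around the `ζ^(-κg)` miss the rays bisecting them; the copy rotated by
  -- `π / p` (`σ = 1`) covers those.
  let center : (ZMod p)ˣ → Fin 2 → ZMod p → ℂ := fun κ σ g ↦
    stdAddChar (-((κ : ZMod p) * g)) * exp ((π * σ / p : ℝ) * I)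
  let Φ : ι × (ZMod p)ˣ × Fin 2 → Y → ZMod p → ℝ := fun a y g ↦
    sectorBump c (center a.2.1 a.2.2 g) (𝓕 (v a.1 y) a.2.1)
  have hdft_shift : ∀ i y κ, 𝓕 (v i (S y)) κ = stdAddChar κ * 𝓕 (v i y) κ := fun i y κ ↦ by
    rw [show v i (S y) = fun g ↦ v i y (g + 1) from funext (hshift i y), dft_comp_add_right,
      one_mul, smul_eq_mul]
  have hcenter_shift : ∀ κ σ g, center κ σ g = stdAddChar (κ : ZMod p) * center κ σ (g + 1) :=
    fun κ σ g ↦ by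
      simp only [center, ← mul_assoc, ← AddChar.map_add_eq_mul]
      ring_nf
  have hcard : Fintype.card (ι × (ZMod p)ˣ × Fin 2) ≤ 2 * Fintype.card ι * p := by
    simp only [Fintype.card_prod, ZMod.card_units, Fintype.card_fin]
    have := Nat.sub_le p 1
    calc _ = 2 * Fintype.card ι * (p - 1) := by ring
      _ ≤ _ := by gcongr
  refine le_trans (zpIndex_le_card_of_family Φ (fun a g ↦ ?_) (fun a y g ↦ sectorBump_nonneg)
    (fun a y g ↦ ?_) (fun a y g h hg hh ↦ ?_) fun y ↦ ?_) (by exact_mod_cast hcard)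
  · simp only [Φ, dft_apply, smul_eq_mul]
    exact continuous_sectorBump.comp
      (continuous_finsetSum _ fun j _ ↦ continuous_const.mul (hcont a.1 j))
  · simp only [Φ, hdft_shift, hcenter_shift _ _ g]
    exact sectorBump_mul_mul (by rw [stdAddChar_apply, Circle.norm_coe])
  · by_contra hgh
    have hlt := lt_norm_add_of_sectorBump_pos hg hh
    have hne : -(a.2.1 * g : ZMod p) ≠ -(a.2.1 * h) := by simpa using hgh
    simp only [center, ← add_mul, norm_mul, norm_exp_ofReal_mul_I, mul_one] at hlt
    exact (norm_stdAddChar_add_stdAddChar_le hne).not_gt hlt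
  · obtain ⟨i, g, g', hgg'⟩ := hnonconst y
    obtain ⟨κ, hκ, hz⟩ := exists_dft_ne_zero_of_ne hgg'
    obtain ⟨q, σ, hq⟩ := exists_sectorBump_stdAddChar_mul_pos (N := p) hz
    refine ⟨(i, Units.mk0 κ hκ, σ), -(κ⁻¹ * q), ?_⟩
    simpa [Φ, center, hκ] using hq

lemma Function.IsPeriodicPt.iterate_val_add_one {α : Type*} {f : α → α} {p : ℕ} [NeZero p] {x : α}
    (hx : IsPeriodicPt f p x) (g : ZMod p) : f^[(g + 1).val] x = f^[g.val] (f x) := by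
  rw [ZMod.val_add, ZMod.val_one_eq_one_mod, Nat.add_mod_mod, hx.iterate_mod_apply,
    Function.iterate_add_apply, Function.iterate_one]

section Dynamics

open Metric Set

variable {X : Type*}

def orbitProfile (T : X → X) (p : ℕ) (f : X → ℝ) (x : X) (g : ZMod p) : ℂ := f (T^[g.val] x)

lemma orbitProfile_apply_add_one {T : X → X} {p : ℕ} [NeZero p] {f : X → ℝ} {x : X}
    (hx : IsPeriodicPt T p x) (g : ZMod p) :
    orbitProfile T p f (T x) g = orbitProfile T p f x (g + 1) := by
  rw [orbitProfile, orbitProfile, hx.iterate_val_add_one]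

variable [MetricSpace X] [CompactSpace X] {T : X → X}

lemma exists_pos_le_dist_apply (hTc : Continuous T) (hT : ∀ x, T x ≠ x) :
    ∃ δ > 0, ∀ x, δ ≤ dist x (T x) := by
  obtain ⟨δ, hδ, h⟩ := isCompact_univ.exists_forall_le' (continuous_id.dist hTc).continuousOn
    fun x _ ↦ dist_pos.2 (hT x).symm
  exact ⟨δ, hδ, fun x ↦ h x (mem_univ x)⟩

theorem exists_zpIndex_perSet_le (hTc : Continuous T) (hT : ∀ x, T x ≠ x) :
    ∃ N : ℕ, ∀ p, p.Prime → zpIndex p (perSet T p) (perMap T p) ≤ 2 * N * p := by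
  obtain ⟨δ, hδ, hδT⟩ := exists_pos_le_dist_apply hTc hT
  obtain ⟨s, hs⟩ := isCompact_univ.elim_finite_subcover (fun c : X ↦ ball c (δ / 2))
    (fun _ ↦ isOpen_ball) fun y _ ↦ mem_iUnion.2 ⟨y, mem_ball_self (half_pos hδ)⟩
  refine ⟨s.card, fun p hp ↦ ?_⟩
  have : Fact p.Prime := ⟨hp⟩
  let bump : s → X → ℝ := fun c y ↦ max 0 (δ / 2 - dist y c)
  have hbump : ∀ c y, 0 < bump c y → bump c (T y) = 0 := fun c y hy ↦ by
    simp only [bump, lt_max_iff, lt_irrefl, false_or, sub_pos] at hy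
    have := dist_triangle_right y (T y) c
    exact max_eq_left (by linarith [hδT y])
  refine (zpIndex_le_of_nonconstant_profiles (S := perMap T p)
    (fun c x ↦ orbitProfile T p (bump c) x.1) (fun c g ↦ ?_) (fun c x g ↦ ?_) fun x ↦ ?_).trans_eq
    (by rw [Fintype.card_coe])
  · simp only [orbitProfile, bump]
    fun_prop
  · exact orbitProfile_apply_add_one x.2 g
  · obtain ⟨c, hc, hxc⟩ := mem_iUnion₂.1 (hs (mem_univ x.1))
    have h0 : 0 < bump ⟨c, hc⟩ x.1 := lt_max_of_lt_right (by rw [mem_ball] at hxc; linarith)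
    refine ⟨⟨c, hc⟩, 0, 1, ?_⟩
    simp only [orbitProfile, ZMod.val_zero, ZMod.val_one, Function.iterate_zero_apply,
      Function.iterate_one, hbump _ _ h0]
    exact_mod_cast h0.ne'

end Dynamics

/-- **Linear growth of the index.** For a fixed-point free compact dynamical system
`(X, T)` there is `C > 0` such that for every prime `p` the ℤ_p-index of the free
ℤ_p-space `(P_p(X), T)` is finite and `ind_p P_p(X) < C·p`. -/
theorem index_linear_growth (X : Type*) [TopologicalSpace X] [CompactSpace X]
    [TopologicalSpace.MetrizableSpace X] (T : X ≃ₜ X) (hT : ∀ x : X, T x ≠ x) :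
    ∃ C : ℝ, 0 < C ∧ ∀ p : ℕ, p.Prime →
      ∃ k : ℕ, zpIndex p (perSet (⇑T) p) (perMap (⇑T) p) = (k : ℕ∞) ∧ (k : ℝ) < C * p := by
  let := TopologicalSpace.metrizableSpaceMetric X
  obtain ⟨N, hN⟩ := exists_zpIndex_perSet_le T.continuous hT
  refine ⟨2 * N + 1, by positivity, fun p hp ↦ ?_⟩
  obtain ⟨k, hk⟩ := ENat.ne_top_iff_exists.mp (ne_top_of_le_ne_top (ENat.natCast_ne_top (2 * N * p))
    (by exact_mod_cast hN p hp))
  have hkN : k ≤ 2 * N * p := by exact_mod_cast hk ▸ hN p hp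
  have hp0 : (0 : ℝ) < p := by exact_mod_cast hp.pos
  refine ⟨k, hk.symm, ?_⟩
  calc (k : ℝ) ≤ 2 * N * p := by exact_mod_cast hkN
    _ < (2 * N + 1) * p := by linarith
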